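/- On the elliptic curve E over Q with coefficients (a1,a2,a3,a4,a6) = (-500894592455, 720663120331059917723712, 485010096730715360294683087532269632, 0, 0), the point (0,0) is a rational point of order exactly 7. -/

import Mathlib

/-!
Let `P = (0,0)`. The chord-and-tangent formulas give `2P`, `3P = 2P + P` and `4P = 3P + P`
explicitly; `3P` and `4P` have the same `x`-coordinate and opposite `y`-coordinates, so
`7P = 4P + 3P = 0`, and as 7 is prime and `P ≠ 0`, `P` has order 7.
-/

def E : WeierstrassCurve.Affine ℚ :=
  ⟨-500894592455, 720663120331059917723712,
    485010096730715360294683087532269632, 0, 0⟩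

namespace WeierstrassCurve.Affine.Point

variable {F : Type*} [Field F] [DecidableEq F] {W : WeierstrassCurve.Affine F}

lemma exists_some_add_some_eq_of_X_ne {x₁ y₁ x₂ y₂ x₃ y₃ : F} (h₁ : W.Nonsingular x₁ y₁)
    (h₂ : W.Nonsingular x₂ y₂) (hx : x₁ ≠ x₂)
    (hx₃ : W.addX x₁ x₂ ((y₁ - y₂) / (x₁ - x₂)) = x₃)
    (hy₃ : W.addY x₁ x₂ y₁ ((y₁ - y₂) / (x₁ - x₂)) = y₃) :
    ∃ h₃ : W.Nonsingular x₃ y₃, some _ _ h₁ + some _ _ h₂ = some _ _ h₃ := by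
  subst hx₃ hy₃
  rw [← slope_of_X_ne (y₁ := y₁) (y₂ := y₂) hx]
  exact ⟨_, add_of_X_ne hx⟩

lemma exists_some_add_self_eq_of_Y_ne {x₁ y₁ x₃ y₃ : F} (h₁ : W.Nonsingular x₁ y₁)
    (hy : y₁ ≠ W.negY x₁ y₁)
    (hx₃ : W.addX x₁ x₁
      ((3 * x₁ ^ 2 + 2 * W.a₂ * x₁ + W.a₄ - W.a₁ * y₁) / (y₁ - W.negY x₁ y₁)) = x₃)
    (hy₃ : W.addY x₁ x₁ y₁
      ((3 * x₁ ^ 2 + 2 * W.a₂ * x₁ + W.a₄ - W.a₁ * y₁) / (y₁ - W.negY x₁ y₁)) = y₃) :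
    ∃ h₃ : W.Nonsingular x₃ y₃, some _ _ h₁ + some _ _ h₁ = some _ _ h₃ := by
  subst hx₃ hy₃
  rw [← slope_of_Y_ne rfl hy]
  exact ⟨_, add_self_of_Y_ne hy⟩

end WeierstrassCurve.Affine.Point

open WeierstrassCurve.Affine

/-- On the rank-6 record curve with torsion `ℤ/7ℤ`, the point `(0,0)` has order exactly 7. -/
theorem point_order_seven :
    ∃ h : E.Nonsingular 0 0, addOrderOf (WeierstrassCurve.Affine.Point.some _ _ h) = 7 := by
  have hP : E.Nonsingular 0 0 := nonsingular_zero.mpr ⟨rfl, .inl (by norm_num [E])⟩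
  refine ⟨hP, ?_⟩
  set P : E.Point := .some _ _ hP
  obtain ⟨h₂, hP₂⟩ := Point.exists_some_add_self_eq_of_Y_ne (x₃ := -720663120331059917723712)
    (y₃ := -845986356686290242461087641062062592) hP (by norm_num [E, negY])
    (by norm_num [E, negY]) (by norm_num [E, negY, addY])
  obtain ⟨h₃, hP₃⟩ := Point.exists_some_add_some_eq_of_X_ne (x₃ := 790040842201375992403176)
    (y₃ := -1016711767715738277263697837529276968) h₂ hP (by norm_num)
    (by norm_num [E]) (by norm_num [E, negY, addY])
  obtain ⟨h₄, hP₄⟩ := Point.exists_some_add_some_eq_of_X_ne (x₃ := 790040842201375992403176)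
    (y₃ := 927428856662286109724024768564644416) h₃ hP (by norm_num)
    (by norm_num [E]) (by norm_num [E, negY, addY])
  have hP₇ : (7 : ℕ) • P = 0 := by
    rw [show (7 : ℕ) • P = (P + P + P + P) + (P + P + P) by abel, hP₂, hP₃, hP₄]
    exact Point.add_of_Y_eq rfl (by norm_num [E, negY])
  have : Fact (Nat.Prime 7) := ⟨by norm_num⟩
  exact addOrderOf_eq_prime hP₇ (Point.some_ne_zero hP)
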